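/- arXiv:math/0309420 — 4 statements merged into one kernel-verified Lean document; each statement's English description precedes it below -/
import Mathlib

section
/- Fix i ∈ {1,…,n} and λ ∈ H_{ii}, and define the linear functional T : E → ℂ by T(ξ) = ⟨λ, ξ_{ii}⟩. Then T(d·ξ·d') = d_i T(ξ) d'_i for all d, d' ∈ ℂⁿ and ξ ∈ E, and sup{ |T(ξ)| : ξ ∈ E, ‖ξ‖_E ≤ 1 } = ‖λ‖. (This is the converse direction in the classification of characters of 𝒯₊(C): every λ in the closed unit ball of H_{ii} yields a contractive covariant functional φ_{(i,λ)}.) -/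
/-- The norm on the quiver correspondence `E = ∏_{k,l} H_{kl}`:
`‖ξ‖_E = max_j (∑_k ‖ξ_{kj}‖²)^{1/2}`. -/
noncomputable def normE {n : ℕ} [Nonempty (Fin n)] {H : Fin n → Fin n → Type*}
    [∀ k l, NormedAddCommGroup (H k l)] (ξ : ∀ k l, H k l) : ℝ :=
  Finset.univ.sup' Finset.univ_nonempty fun j : Fin n =>
    Real.sqrt (∑ k : Fin n, ‖ξ k j‖ ^ 2)

/-- The `ℂⁿ`-bimodule action on `E`: `(d·ξ·d')_{kl} = d_k ξ_{kl} d'_l`. -/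
def bimod {n : ℕ} {H : Fin n → Fin n → Type*} [∀ k l, AddCommGroup (H k l)]
    [∀ k l, Module ℂ (H k l)] (d : Fin n → ℂ) (ξ : ∀ k l, H k l) (d' : Fin n → ℂ) :
    ∀ k l, H k l :=
  fun k l => (d k * d' l) • ξ k l

section

variable {n : ℕ} [Nonempty (Fin n)] {H : Fin n → Fin n → Type*}
  [∀ k l, NormedAddCommGroup (H k l)]

theorem norm_le_normE (ξ : ∀ k l, H k l) (k l : Fin n) : ‖ξ k l‖ ≤ normE ξ := by
  have h_entry : ‖ξ k l‖ ≤ Real.sqrt (∑ k' : Fin n, ‖ξ k' l‖ ^ 2) :=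
    (Real.le_sqrt (norm_nonneg _) (by positivity)).2 <|
      Finset.single_le_sum (f := fun k' => ‖ξ k' l‖ ^ 2) (fun _ _ => by positivity)
        (Finset.mem_univ k)
  exact h_entry.trans (Finset.le_sup' (fun j => Real.sqrt (∑ k' : Fin n, ‖ξ k' j‖ ^ 2))
    (Finset.mem_univ l))

theorem normE_single_single (i j : Fin n) (v : H i j) :
    normE (Pi.single i (Pi.single j v) : ∀ k l, H k l) = ‖v‖ := by
  set ξ : ∀ k l, H k l := Pi.single i (Pi.single j v)
  have h_entry : ∀ l, ‖ξ i l‖ ≤ ‖v‖ := by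
    intro l
    by_cases hl : l = j
    · subst hl; simp [ξ]
    · simp [ξ, Pi.single_eq_of_ne hl]
  refine le_antisymm (Finset.sup'_le _ _ fun l _ => ?_) (by simpa [ξ] using norm_le_normE ξ i j)
  rw [Finset.sum_eq_single i (fun k _ hk => by simp [ξ, Pi.single_eq_of_ne hk]) (by simp),
    Real.sqrt_sq (norm_nonneg _)]
  exact h_entry l

end

/-- for `i` and `λ ∈ H_{ii}`, the functional `T ξ = ⟨λ, ξ_{ii}⟩` is covariant:
`T(d·ξ·d') = d_i T(ξ) d'_i`, and its norm, `sup {|T ξ| : ‖ξ‖_E ≤ 1}`, equals `‖λ‖`. -/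
theorem stmt_1 {n : ℕ} [Nonempty (Fin n)] {H : Fin n → Fin n → Type*}
    [∀ k l, NormedAddCommGroup (H k l)] [∀ k l, InnerProductSpace ℂ (H k l)]
    (i : Fin n) (lam : H i i)
    (T : (∀ k l, H k l) → ℂ)
    (hT : ∀ ξ : ∀ k l, H k l, T ξ = (inner ℂ lam (ξ i i) : ℂ)) :
    (∀ (d d' : Fin n → ℂ) (ξ : ∀ k l, H k l),
        T (bimod d ξ d') = d i * T ξ * d' i) ∧
      IsLUB {r : ℝ | ∃ ξ : ∀ k l, H k l, normE ξ ≤ 1 ∧ r = ‖T ξ‖} ‖lam‖ := by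
  refine ⟨fun d d' ξ => by simp only [hT, bimod, inner_smul_right]; ring, ?_, ?_⟩
  · rintro r ⟨ξ, hξ, rfl⟩
    calc ‖T ξ‖ ≤ ‖lam‖ * ‖ξ i i‖ := hT ξ ▸ norm_inner_le_norm _ _
      _ ≤ ‖lam‖ * 1 := by gcongr; exact (norm_le_normE ξ i i).trans hξ
      _ = ‖lam‖ := mul_one _
  · intro b hb
    -- at `lam = 0` this is `0` (as `0⁻¹ = 0`), which still attains the supremum `0`
    set u : H i i := (‖lam‖ : ℂ)⁻¹ • lam
    have hu : ‖u‖ ≤ 1 := by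
      rcases eq_or_ne lam 0 with h | h
      · simp [u, h]
      · exact (norm_smul_inv_norm h).le
    have hTu : T (Pi.single i (Pi.single i u)) = ‖lam‖ := by
      rw [hT, Pi.single_eq_same, Pi.single_eq_same, inner_smul_right,
        inner_self_eq_norm_sq_to_K, inv_mul_eq_div, sq]
      exact mul_self_div_self _
    simpa [hTu] using hb ⟨_, (normE_single_single i i u).trans_le hu, rfl⟩
end

section
/- Fix distinct indices i ≠ j in {1,…,n} and vectors λ_i ∈ H_{ii}, λ_j ∈ H_{jj}, γ ∈ H_{ij} satisfying ‖λ_i‖² + ‖γ‖² ≤ 1 and ‖λ_j‖ ≤ 1. Define T_γ : E → M₂(ℂ) by T_γ(ξ) = [[⟨λ_i, ξ_{ii}⟩, ⟨γ, ξ_{ij}⟩], [0, ⟨λ_j, ξ_{jj}⟩]]. Then ‖T_γ(ξ)‖_op ≤ ‖ξ‖_E for all ξ ∈ E (operator norm on M₂(ℂ) acting on ℂ² with the euclidean norm). (This is the contractivity of the covariant maps T_γ that define the representations ρ_γ = T_γ × σ belonging to G(C, λ̃, i, j).) -/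
/-- The operator norm of a `2 × 2` complex matrix acting on `ℂ²` with the
euclidean norm. -/
noncomputable def opNorm2 (M : Matrix (Fin 2) (Fin 2) ℂ) : ℝ :=
  ‖LinearMap.toContinuousLinearMap (Matrix.toEuclideanLin M)‖

section normE

variable {n : ℕ} [Nonempty (Fin n)] {H : Fin n → Fin n → Type*}
  [∀ k l, NormedAddCommGroup (H k l)]

lemma sum_norm_sq_le_normE_sq (ξ : ∀ k l, H k l) (l : Fin n) :
    ∑ k, ‖ξ k l‖ ^ 2 ≤ normE ξ ^ 2 := by
  have hcol : Real.sqrt (∑ k, ‖ξ k l‖ ^ 2) ≤ normE ξ :=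
    Finset.le_sup' (fun j => Real.sqrt (∑ k, ‖ξ k j‖ ^ 2)) (Finset.mem_univ l)
  exact (Real.sqrt_le_left ((Real.sqrt_nonneg _).trans hcol)).mp hcol

lemma normE_nonneg (ξ : ∀ k l, H k l) : 0 ≤ normE ξ :=
  (Real.sqrt_nonneg _).trans
    (Finset.le_sup' (fun j => Real.sqrt (∑ k, ‖ξ k j‖ ^ 2)) (Finset.mem_univ (Classical.arbitrary _)))

lemma norm_sq_le_normE_sq (ξ : ∀ k l, H k l) (k l : Fin n) : ‖ξ k l‖ ^ 2 ≤ normE ξ ^ 2 :=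
  (Finset.single_le_sum (f := fun k => ‖ξ k l‖ ^ 2) (fun _ _ => sq_nonneg _)
    (Finset.mem_univ k)).trans (sum_norm_sq_le_normE_sq ξ l)

lemma norm_sq_add_norm_sq_le_normE_sq (ξ : ∀ k l, H k l) {k k' : Fin n} (hk : k ≠ k')
    (l : Fin n) : ‖ξ k l‖ ^ 2 + ‖ξ k' l‖ ^ 2 ≤ normE ξ ^ 2 := by
  rw [← Finset.sum_pair (f := fun k => ‖ξ k l‖ ^ 2) hk]
  exact (Finset.sum_le_sum_of_subset_of_nonneg (Finset.subset_univ _)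
    fun _ _ _ => sq_nonneg _).trans (sum_norm_sq_le_normE_sq ξ l)

end normE

lemma opNorm2_upperTriangular_le {a b c : ℂ} {N : ℝ} (hN : 0 ≤ N)
    (h : ∀ x₀ x₁ : ℂ, ‖a * x₀ + b * x₁‖ ^ 2 + ‖c * x₁‖ ^ 2 ≤ N ^ 2 * (‖x₀‖ ^ 2 + ‖x₁‖ ^ 2)) :
    opNorm2 !![a, b; 0, c] ≤ N := by
  refine ContinuousLinearMap.opNorm_le_bound _ hN fun x => ?_
  refine le_of_pow_le_pow_left₀ two_ne_zero (by positivity) ?_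
  simpa only [LinearMap.coe_toContinuousLinearMap', EuclideanSpace.norm_sq_eq,
    Matrix.ofLp_toLpLin, Matrix.toLin'_apply, Matrix.cons_mulVec, dotProduct, Fin.sum_univ_two,
    Matrix.cons_val_zero, Matrix.cons_val_one, Matrix.cons_val_fin_one, zero_mul, zero_add,
    Matrix.empty_mulVec, mul_pow] using h (x 0) (x 1)

lemma norm_inner_mul_add_inner_mul_sq_le {E F : Type*} [NormedAddCommGroup E]
    [InnerProductSpace ℂ E] [NormedAddCommGroup F] [InnerProductSpace ℂ F]
    (u y : E) (v z : F) (s t : ℂ) :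
    ‖inner ℂ u y * s + inner ℂ v z * t‖ ^ 2
      ≤ (‖u‖ ^ 2 + ‖v‖ ^ 2) * (‖y‖ ^ 2 * ‖s‖ ^ 2 + ‖z‖ ^ 2 * ‖t‖ ^ 2) := by
  have htri : ‖inner ℂ u y * s + inner ℂ v z * t‖ ≤ ‖u‖ * (‖y‖ * ‖s‖) + ‖v‖ * (‖z‖ * ‖t‖) :=
    calc ‖inner ℂ u y * s + inner ℂ v z * t‖
        ≤ ‖inner ℂ u y‖ * ‖s‖ + ‖inner ℂ v z‖ * ‖t‖ := by
          simpa only [norm_mul] using norm_add_le (inner ℂ u y * s) (inner ℂ v z * t)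
      _ ≤ ‖u‖ * ‖y‖ * ‖s‖ + ‖v‖ * ‖z‖ * ‖t‖ := by
          gcongr <;> exact norm_inner_le_norm _ _
      _ = _ := by ring
  calc ‖inner ℂ u y * s + inner ℂ v z * t‖ ^ 2
      ≤ (‖u‖ * (‖y‖ * ‖s‖) + ‖v‖ * (‖z‖ * ‖t‖)) ^ 2 := by gcongr
    _ ≤ (‖u‖ ^ 2 + ‖v‖ ^ 2) * ((‖y‖ * ‖s‖) ^ 2 + (‖z‖ * ‖t‖) ^ 2) := by
          nlinarith [sq_nonneg (‖u‖ * (‖z‖ * ‖t‖) - ‖v‖ * (‖y‖ * ‖s‖))]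
    _ = _ := by ring

/-- if `‖λ_i‖² + ‖γ‖² ≤ 1` and `‖λ_j‖ ≤ 1` then the map
`T_γ(ξ) = [[⟨λ_i, ξ_{ii}⟩, ⟨γ, ξ_{ij}⟩], [0, ⟨λ_j, ξ_{jj}⟩]]` is contractive:
`‖T_γ(ξ)‖_op ≤ ‖ξ‖_E` for all `ξ ∈ E`. -/
theorem stmt_5 {n : ℕ} [Nonempty (Fin n)] {H : Fin n → Fin n → Type*}
    [∀ k l, NormedAddCommGroup (H k l)] [∀ k l, InnerProductSpace ℂ (H k l)]
    (i j : Fin n) (hij : i ≠ j) (lami : H i i) (lamj : H j j) (γ : H i j)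
    (h1 : ‖lami‖ ^ 2 + ‖γ‖ ^ 2 ≤ 1) (h2 : ‖lamj‖ ≤ 1) :
    ∀ ξ : ∀ k l, H k l,
      opNorm2 !![(inner ℂ lami (ξ i i) : ℂ), (inner ℂ γ (ξ i j) : ℂ);
                 0, (inner ℂ lamj (ξ j j) : ℂ)] ≤ normE ξ := by
  intro ξ
  refine opNorm2_upperTriangular_le (normE_nonneg ξ) fun x₀ x₁ => ?_
  have hcol_i := norm_sq_le_normE_sq ξ i i
  have hcol_j := norm_sq_add_norm_sq_le_normE_sq ξ hij j
  have hrow_i : ‖inner ℂ lami (ξ i i) * x₀ + inner ℂ γ (ξ i j) * x₁‖ ^ 2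
      ≤ ‖ξ i i‖ ^ 2 * ‖x₀‖ ^ 2 + ‖ξ i j‖ ^ 2 * ‖x₁‖ ^ 2 :=
    (norm_inner_mul_add_inner_mul_sq_le _ _ _ _ _ _).trans
      (mul_le_of_le_one_left (by positivity) h1)
  have hrow_j : ‖inner ℂ lamj (ξ j j) * x₁‖ ^ 2 ≤ ‖ξ j j‖ ^ 2 * ‖x₁‖ ^ 2 := by
    rw [norm_mul, mul_pow]
    gcongr
    exact (norm_inner_le_norm _ _).trans (mul_le_of_le_one_left (norm_nonneg _) h2)
  calc _ ≤ ‖ξ i i‖ ^ 2 * ‖x₀‖ ^ 2 + (‖ξ i j‖ ^ 2 + ‖ξ j j‖ ^ 2) * ‖x₁‖ ^ 2 := by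
        linarith
    _ ≤ normE ξ ^ 2 * (‖x₀‖ ^ 2 + ‖x₁‖ ^ 2) := by
        rw [mul_add]
        gcongr
end

section
/- Assume 0 ≤ q₁ < 1, 0 ≤ q₂ < 1 and t ≥ 0, and set q = max(q₁, q₂). Then for every k ≥ 1, max(a_k, b_k) ≤ q^k + k t q^{k-1}, and consequently max(a_k, b_k) → 0 as k → ∞. (This is the decay estimate proving that T̃_k T̃_k* → 0, so that the representation ρ_γ extends to a w*-continuous representation of H^∞(C).) -/
/-!
Since `b_k = q₂^k`, unrolling the recursion for `a` gives
`a_k = q₁^k + t ∑_{i+j=k-1} q₁^i q₂^j`, a sum of `k` terms each at most `q^{k-1}`; the induction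
`a_{k+1} ≤ q (q^k + k t q^{k-1}) + t q^k` carries exactly this bound. The limit follows from
`k q^{k-1} → 0` for `0 ≤ q < 1`.
-/

open Filter Topology

lemma eq_pow_of_succ_eq_mul {r : ℝ} {b : ℕ → ℝ} (hb1 : b 1 = r)
    (hbrec : ∀ k, 1 ≤ k → b (k + 1) = r * b k) {k : ℕ} (hk : 1 ≤ k) : b k = r ^ k := by
  induction k, hk using Nat.le_induction with
  | base => simpa using hb1
  | succ n hn ih => rw [hbrec n hn, ih, pow_succ']

section Recursion

variable {q₁ q₂ t : ℝ} {a b : ℕ → ℝ} (ha1 : a 1 = q₁ + t) (hb1 : b 1 = q₂)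
  (harec : ∀ k, 1 ≤ k → a (k + 1) = q₁ * a k + t * b k)
  (hbrec : ∀ k, 1 ≤ k → b (k + 1) = q₂ * b k)
include ha1 hb1 harec hbrec

lemma nonneg_of_recursion (hq₁ : 0 ≤ q₁) (hq₂ : 0 ≤ q₂) (ht : 0 ≤ t) {k : ℕ} (hk : 1 ≤ k) :
    0 ≤ a k := by
  induction k, hk using Nat.le_induction with
  | base => rw [ha1]; positivity
  | succ n hn ih =>
    rw [harec n hn, eq_pow_of_succ_eq_mul hb1 hbrec hn]
    positivity

lemma le_of_recursion {q : ℝ} (hq₁ : 0 ≤ q₁) (hq₂ : 0 ≤ q₂) (ht : 0 ≤ t)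
    (hq₁q : q₁ ≤ q) (hq₂q : q₂ ≤ q) {k : ℕ} (hk : 1 ≤ k) :
    a k ≤ q ^ k + k * t * q ^ (k - 1) := by
  induction k, hk using Nat.le_induction with
  | base => simp [ha1, hq₁q]
  | succ n hn ih =>
    have hq : 0 ≤ q := hq₂.trans hq₂q
    have ha_n : q₁ * a n ≤ q * (q ^ n + n * t * q ^ (n - 1)) :=
      mul_le_mul hq₁q ih (nonneg_of_recursion ha1 hb1 harec hbrec hq₁ hq₂ ht hn) hq
    have hb_n : b n ≤ q ^ n := by
      rw [eq_pow_of_succ_eq_mul hb1 hbrec hn]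
      exact pow_le_pow_left₀ hq₂ hq₂q n
    have hqpow : q * q ^ (n - 1) = q ^ n := mul_pow_sub_one (by omega) q
    calc a (n + 1) = q₁ * a n + t * b n := harec n hn
      _ ≤ q * (q ^ n + n * t * q ^ (n - 1)) + t * q ^ n := by gcongr
      _ = q ^ (n + 1) + (n + 1 : ℕ) * t * q ^ (n + 1 - 1) := by
        rw [Nat.add_sub_cancel, pow_succ', mul_add, ← hqpow]
        push_cast
        ring

end Recursion

lemma tendsto_pow_add_mul_pow_pred {q : ℝ} (hq : 0 ≤ q) (hq1 : q < 1) (t : ℝ) :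
    Tendsto (fun k : ℕ => q ^ k + k * t * q ^ (k - 1)) atTop (𝓝 0) := by
  have hpow := tendsto_pow_atTop_nhds_zero_of_lt_one hq hq1
  have hmul := tendsto_self_mul_const_pow_of_lt_one hq hq1
  rw [← tendsto_add_atTop_iff_nat 1]
  have := (hpow.const_mul q).add ((hmul.const_mul t).add (hpow.const_mul t))
  simp only [mul_zero, add_zero] at this
  refine this.congr fun k => ?_
  simp only [Nat.add_sub_cancel, pow_succ', Nat.cast_succ]
  ring

/-- if `0 ≤ q₁ < 1`, `0 ≤ q₂ < 1`, `t ≥ 0` and `q = max(q₁, q₂)`, then for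
every `k ≥ 1` one has `max(a_k, b_k) ≤ q^k + k t q^{k-1}`, and consequently
`max(a_k, b_k) → 0` as `k → ∞`. -/
theorem stmt_11 (q₁ q₂ t : ℝ) (hq₁ : 0 ≤ q₁) (hq₁' : q₁ < 1)
    (hq₂ : 0 ≤ q₂) (hq₂' : q₂ < 1) (ht : 0 ≤ t)
    (a b : ℕ → ℝ)
    (ha1 : a 1 = q₁ + t) (hb1 : b 1 = q₂)
    (harec : ∀ k, 1 ≤ k → a (k + 1) = q₁ * a k + t * b k)
    (hbrec : ∀ k, 1 ≤ k → b (k + 1) = q₂ * b k) :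
    (∀ k, 1 ≤ k →
        max (a k) (b k) ≤ max q₁ q₂ ^ k + (k : ℝ) * t * max q₁ q₂ ^ (k - 1)) ∧
      Filter.Tendsto (fun k => max (a k) (b k)) Filter.atTop (nhds 0) := by
  set q := max q₁ q₂
  have hq : 0 ≤ q := hq₂.trans (le_max_right _ _)
  have hb : ∀ k, 1 ≤ k → b k = q₂ ^ k := fun k hk => eq_pow_of_succ_eq_mul hb1 hbrec hk
  have hbound : ∀ k, 1 ≤ k → max (a k) (b k) ≤ q ^ k + k * t * q ^ (k - 1) := by
    intro k hk
    refine max_le (le_of_recursion ha1 hb1 harec hbrec hq₁ hq₂ ht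
      (le_max_left _ _) (le_max_right _ _) hk) ?_
    rw [hb k hk]
    have hb_le : q₂ ^ k ≤ q ^ k := pow_le_pow_left₀ hq₂ (le_max_right q₁ q₂) k
    have hterm : 0 ≤ k * t * q ^ (k - 1) := by positivity
    linarith
  refine ⟨hbound, squeeze_zero' ?_ ?_ (tendsto_pow_add_mul_pow_pred hq (max_lt hq₁' hq₂') t)⟩
  · filter_upwards [eventually_ge_atTop 1] with k hk
    exact le_max_of_le_right (by rw [hb k hk]; positivity)
  · filter_upwards [eventually_ge_atTop 1] with k hk
    exact hbound k hk
end

section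
/- Assume ‖λ₁‖ < 1 and ‖λ₂‖ < 1. Define bounded operators P_k on ℂ² recursively by P₁ = S S* and P_{k+1} z = S(a_k·u_z, b_k·v_z, b_k·w_z), where (u_z, v_z, w_z) = S*(z) and a_k = ⟨e₁, P_k e₁⟩, b_k = ⟨e₂, P_k e₂⟩ are the diagonal entries of P_k (e₁, e₂ being the standard basis of ℂ²). Then each P_k is the diagonal operator diag(a_k, b_k) with a_k, b_k ≥ 0, and ‖P_k‖ → 0 as k → ∞. (This is the concrete form of the statement T̃_k T̃_k* → 0 in the strong operator topology for the covariant pair (T_γ, σ).) -/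
/-- The first standard basis vector of `ℂ²`. -/
noncomputable def e₁ : EuclideanSpace ℂ (Fin 2) := EuclideanSpace.single 0 1

/-- The second standard basis vector of `ℂ²`. -/
noncomputable def e₂ : EuclideanSpace ℂ (Fin 2) := EuclideanSpace.single 1 1

/-!
Writing `S* z = (z₀ λ₁, z₀ γ, z₁ λ₂)`, one computes that `S (α u, β v, β w)` with
`(u, v, w) = S* z` is the diagonal operator `diag(α ‖λ₁‖² + β ‖γ‖², β ‖λ₂‖²)`. Hence
`b_k = ‖λ₂‖^{2k}` and `a_{k+1} = ‖λ₁‖² a_k + ‖γ‖² b_k`: a contraction perturbed by a geometric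
sequence, so both entries tend to `0`, and with them the diagonal operators.
-/

open Filter Topology

theorem tendsto_zero_of_le_mul_add_mul_pow {a : ℕ → ℝ} {r s c : ℝ} (ha : ∀ n, 0 ≤ a n)
    (hr₀ : 0 ≤ r) (hr : r < 1) (hs₀ : 0 ≤ s) (hs : s < 1) (hc : 0 ≤ c)
    (hrec : ∀ n, a (n + 1) ≤ r * a n + c * s ^ n) :
    Tendsto a atTop (𝓝 0) := by
  -- geometric domination `a n ≤ C t ^ n` for some `t` strictly between `max r s` and `1`
  set t := (max r s + 1) / 2
  have hrt : r < t := by simp only [t]; linarith [le_max_left r s, max_lt hr hs]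
  have hst : s < t := by simp only [t]; linarith [le_max_right r s, max_lt hr hs]
  have ht : t < 1 := by simp only [t]; linarith [max_lt hr hs]
  set C := max (a 0) (c / (t - r))
  have hC : c ≤ C * (t - r) := (div_le_iff₀ (by linarith)).mp (le_max_right _ _)
  have hbound : ∀ n, a n ≤ C * t ^ n := by
    intro n
    induction n with
    | zero => simp [C]
    | succ n ih =>
      have hts : s ^ n ≤ t ^ n := pow_le_pow_left₀ hs₀ hst.le n
      calc a (n + 1) ≤ r * (C * t ^ n) + c * t ^ n := (hrec n).trans (by gcongr)
        _ ≤ r * (C * t ^ n) + C * (t - r) * t ^ n := by gcongr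
        _ = C * t ^ (n + 1) := by ring
  have hlim : Tendsto (fun n ↦ C * t ^ n) atTop (𝓝 0) := by
    simpa using (tendsto_pow_atTop_nhds_zero_of_lt_one (by linarith) ht).const_mul C
  exact squeeze_zero ha hbound hlim

/-- `diagCoeff ‖λ₁‖² ‖γ‖² ‖λ₂‖² k` is the entry `a_k`; the value `1` at `k = 0` makes
`P₁ = S S*` the instance `a₀ = b₀ = 1` of the recursion. -/
def diagCoeff (r c s : ℝ) : ℕ → ℝ
  | 0 => 1
  | n + 1 => r * diagCoeff r c s n + c * s ^ n

theorem diagCoeff_nonneg {r c s : ℝ} (hr : 0 ≤ r) (hc : 0 ≤ c) (hs : 0 ≤ s) (n : ℕ) :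
    0 ≤ diagCoeff r c s n := by
  induction n with
  | zero => exact zero_le_one
  | succ n ih => simp only [diagCoeff]; positivity

theorem tendsto_diagCoeff {r c s : ℝ} (hr₀ : 0 ≤ r) (hr : r < 1) (hc : 0 ≤ c) (hs₀ : 0 ≤ s)
    (hs : s < 1) : Tendsto (diagCoeff r c s) atTop (𝓝 0) :=
  tendsto_zero_of_le_mul_add_mul_pow (diagCoeff_nonneg hr₀ hc hs₀) hr₀ hr hs₀ hs hc
    fun _ ↦ le_rfl

noncomputable def diagCLM (a b : ℂ) : EuclideanSpace ℂ (Fin 2) →L[ℂ] EuclideanSpace ℂ (Fin 2) :=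
  a • (EuclideanSpace.proj 0).smulRight e₁ + b • (EuclideanSpace.proj 1).smulRight e₂

theorem diagCLM_apply (a b : ℂ) (z : EuclideanSpace ℂ (Fin 2)) :
    diagCLM a b z = (WithLp.equiv 2 _).symm ![a * z 0, b * z 1] := by
  ext i
  fin_cases i <;> simp [diagCLM, e₁, e₂]

theorem inner_e₁_diagCLM (a b : ℂ) : inner ℂ e₁ (diagCLM a b e₁) = a := by
  simp [diagCLM, e₁, e₂]

theorem inner_e₂_diagCLM (a b : ℂ) : inner ℂ e₂ (diagCLM a b e₂) = b := by
  simp [diagCLM, e₁, e₂]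

theorem Filter.Tendsto.diagCLM {ι : Type*} {l : Filter ι} {a b : ι → ℂ} {a₀ b₀ : ℂ}
    (ha : Tendsto a l (𝓝 a₀)) (hb : Tendsto b l (𝓝 b₀)) :
    Tendsto (fun i ↦ diagCLM (a i) (b i)) l (𝓝 (diagCLM a₀ b₀)) :=
  (ha.smul_const _).add (hb.smul_const _)

theorem diagCLM_zero : diagCLM 0 0 = 0 := by
  ext z i
  fin_cases i <;> simp [diagCLM_apply]

section

variable {H₁ H₂ H₃ : Type*}
    [NormedAddCommGroup H₁] [InnerProductSpace ℂ H₁]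
    [NormedAddCommGroup H₂] [InnerProductSpace ℂ H₂]
    [NormedAddCommGroup H₃] [InnerProductSpace ℂ H₃]
    {lam₁ : H₁} {γ : H₂} {lam₂ : H₃}
    {S : WithLp 2 (H₁ × WithLp 2 (H₂ × H₃)) →L[ℂ] EuclideanSpace ℂ (Fin 2)}

theorem adjoint_apply_eq_of_apply_eq [CompleteSpace H₁] [CompleteSpace H₂] [CompleteSpace H₃]
    (hS : ∀ (u : H₁) (v : H₂) (w : H₃),
      S ((WithLp.equiv 2 _).symm (u, (WithLp.equiv 2 _).symm (v, w))) =
        (WithLp.equiv 2 _).symm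
          ![(inner ℂ lam₁ u : ℂ) + (inner ℂ γ v : ℂ), (inner ℂ lam₂ w : ℂ)])
    (z : EuclideanSpace ℂ (Fin 2)) :
    ContinuousLinearMap.adjoint S z =
      (WithLp.equiv 2 _).symm (z 0 • lam₁, (WithLp.equiv 2 _).symm (z 0 • γ, z 1 • lam₂)) := by
  refine ext_inner_left ℂ fun x ↦ ?_
  rw [ContinuousLinearMap.adjoint_inner_right]
  obtain ⟨u, v, w, rfl⟩ : ∃ u v w, x = (WithLp.equiv 2 _).symm (u, (WithLp.equiv 2 _).symm (v, w)) :=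
    ⟨_, _, _, rfl⟩
  rw [hS]
  simp [WithLp.prod_inner_apply, PiLp.inner_apply, Fin.sum_univ_two, inner_smul_right]
  ring

theorem apply_smul_eq_diagCLM (hS : ∀ (u : H₁) (v : H₂) (w : H₃),
      S ((WithLp.equiv 2 _).symm (u, (WithLp.equiv 2 _).symm (v, w))) =
        (WithLp.equiv 2 _).symm
          ![(inner ℂ lam₁ u : ℂ) + (inner ℂ γ v : ℂ), (inner ℂ lam₂ w : ℂ)])
    (α β : ℝ) (z : EuclideanSpace ℂ (Fin 2)) :
    S ((WithLp.equiv 2 _).symm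
        ((α : ℂ) • z 0 • lam₁, (WithLp.equiv 2 _).symm ((β : ℂ) • z 0 • γ, (β : ℂ) • z 1 • lam₂))) =
      diagCLM (α * ‖lam₁‖ ^ 2 + β * ‖γ‖ ^ 2 : ℝ) (β * ‖lam₂‖ ^ 2 : ℝ) z := by
  rw [hS, diagCLM_apply]
  congr 1
  ext i
  fin_cases i <;> simp [inner_self_eq_norm_sq_to_K] <;> ring

end

/-- assume `‖λ₁‖ < 1` and `‖λ₂‖ < 1`.  Define `P₁ = S S*` and
`P_{k+1} z = S(a_k·u_z, b_k·v_z, b_k·w_z)` where `(u_z, v_z, w_z) = S*(z)` and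
`a_k = ⟨e₁, P_k e₁⟩`, `b_k = ⟨e₂, P_k e₂⟩`.  Then each `P_k` is the diagonal operator
`diag(a_k, b_k)` with `a_k, b_k ≥ 0`, and `‖P_k‖ → 0` as `k → ∞`. -/
theorem stmt_12 {H₁ H₂ H₃ : Type*}
    [NormedAddCommGroup H₁] [InnerProductSpace ℂ H₁] [CompleteSpace H₁]
    [NormedAddCommGroup H₂] [InnerProductSpace ℂ H₂] [CompleteSpace H₂]
    [NormedAddCommGroup H₃] [InnerProductSpace ℂ H₃] [CompleteSpace H₃]
    (lam₁ : H₁) (γ : H₂) (lam₂ : H₃)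
    (hlam₁ : ‖lam₁‖ < 1) (hlam₂ : ‖lam₂‖ < 1)
    (S : WithLp 2 (H₁ × WithLp 2 (H₂ × H₃)) →L[ℂ] EuclideanSpace ℂ (Fin 2))
    (hS : ∀ (u : H₁) (v : H₂) (w : H₃),
      S ((WithLp.equiv 2 _).symm (u, (WithLp.equiv 2 _).symm (v, w))) =
        (WithLp.equiv 2 _).symm
          ![(inner ℂ lam₁ u : ℂ) + (inner ℂ γ v : ℂ), (inner ℂ lam₂ w : ℂ)])
    (P : ℕ → EuclideanSpace ℂ (Fin 2) →L[ℂ] EuclideanSpace ℂ (Fin 2))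
    (hP1 : P 1 = S.comp (ContinuousLinearMap.adjoint S))
    (hPrec : ∀ k, 1 ≤ k → ∀ z : EuclideanSpace ℂ (Fin 2),
      P (k + 1) z =
        S ((WithLp.equiv 2 _).symm
          ((inner ℂ e₁ (P k e₁) : ℂ) •
              (WithLp.equiv 2 _ (ContinuousLinearMap.adjoint S z)).1,
            (WithLp.equiv 2 _).symm
              ((inner ℂ e₂ (P k e₂) : ℂ) •
                  ((WithLp.equiv 2 _)
                    ((WithLp.equiv 2 _ (ContinuousLinearMap.adjoint S z)).2)).1,
                (inner ℂ e₂ (P k e₂) : ℂ) •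
                  ((WithLp.equiv 2 _)
                    ((WithLp.equiv 2 _ (ContinuousLinearMap.adjoint S z)).2)).2)))) :
    (∀ k, 1 ≤ k → ∃ aₖ bₖ : ℝ, 0 ≤ aₖ ∧ 0 ≤ bₖ ∧
        (inner ℂ e₁ (P k e₁) : ℂ) = (aₖ : ℂ) ∧ (inner ℂ e₂ (P k e₂) : ℂ) = (bₖ : ℂ) ∧
        ∀ z : EuclideanSpace ℂ (Fin 2),
          P k z = (WithLp.equiv 2 _).symm ![(aₖ : ℂ) * z 0, (bₖ : ℂ) * z 1]) ∧
      Filter.Tendsto (fun k => ‖P k‖) Filter.atTop (nhds 0) := by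
  set r := ‖lam₁‖ ^ 2
  set c := ‖γ‖ ^ 2
  set s := ‖lam₂‖ ^ 2
  have hr : r < 1 := by simp only [r]; nlinarith [norm_nonneg lam₁]
  have hs : s < 1 := by simp only [s]; nlinarith [norm_nonneg lam₂]
  set a := diagCoeff r c s
  have hP : ∀ k, 1 ≤ k → P k = diagCLM (a k) (s ^ k : ℝ) := by
    refine Nat.le_induction ?_ fun k hk ih ↦ ?_ <;> ext1 z
    · rw [hP1, ContinuousLinearMap.comp_apply, adjoint_apply_eq_of_apply_eq hS]
      convert apply_smul_eq_diagCLM hS 1 1 z using 2 <;> simp [a, r, c, s, diagCoeff]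
    · rw [hPrec k hk, ih, inner_e₁_diagCLM, inner_e₂_diagCLM, adjoint_apply_eq_of_apply_eq hS]
      simp only [Equiv.apply_symm_apply]
      rw [apply_smul_eq_diagCLM hS]
      congr 3
      simp only [a, diagCoeff]
      ring
  refine ⟨fun k hk ↦ ⟨a k, s ^ k, diagCoeff_nonneg (by positivity) (by positivity) (by positivity) k,
    by positivity, by rw [hP k hk, inner_e₁_diagCLM], by rw [hP k hk, inner_e₂_diagCLM],
    fun z ↦ by rw [hP k hk, diagCLM_apply]⟩, ?_⟩
  have ha : Tendsto a atTop (𝓝 0) :=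
    tendsto_diagCoeff (by positivity) hr (by positivity) (by positivity) hs
  have hb : Tendsto (fun k ↦ s ^ k) atTop (𝓝 0) :=
    tendsto_pow_atTop_nhds_zero_of_lt_one (by positivity) hs
  have hlim := ha.ofReal.diagCLM hb.ofReal
  rw [Complex.ofReal_zero, diagCLM_zero] at hlim
  refine (tendsto_norm_zero.comp hlim).congr' ?_
  filter_upwards [eventually_ge_atTop 1] with k hk
  simp [hP k hk]
end
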